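/- In Equiv.Perm (ℤ × ℤ), let τ be the permutation τ (i, j) = (i + 1, j) and let σ be the permutation with σ (i, j) = (i, j + 1) if i = 0 and σ (i, j) = (i, j) if i ≠ 0. For n : ℤ set gₙ = τ^n * σ * τ^(−n). Then the elements gₙ pairwise commute, and the subgroup of Equiv.Perm (ℤ × ℤ) generated by {gₙ | n : ℤ} is free abelian of countably infinite rank: the group homomorphism from the direct sum ⨁ (n : ℤ), ℤ that sends the n-th standard basis element to gₙ is injective. -/

import Mathlib

/-!
Conjugating `σ` by `τⁿ` moves its support to the fibre `i = n`, so `gₙ` is the fibrewise shift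
`(i, j) ↦ (i, f i + j)` with `f = Pi.single n 1`. Sending `f : ℤ → ℤ` to its fibrewise shift is a
homomorphism from `(ℤ → ℤ, +)`, injective because `f i` is read off from the image of `(i, 0)`;
restricted to finitely supported `f`, i.e. to `⨁ (n : ℤ), ℤ`, it is the required embedding.
-/

/-- The permutation `c` of the comb digraph: shift the first coordinate. -/
def combTau : Equiv.Perm (ℤ × ℤ) where
  toFun p := (p.1 + 1, p.2)
  invFun p := (p.1 - 1, p.2)
  left_inv p := by simp
  right_inv p := by simp

/-- The permutation `a` of the comb digraph: shift the second coordinate on the line `i = 0`,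
fix everything else. -/
def combSigma : Equiv.Perm (ℤ × ℤ) where
  toFun p := if p.1 = 0 then (p.1, p.2 + 1) else p
  invFun p := if p.1 = 0 then (p.1, p.2 - 1) else p
  left_inv p := by by_cases h : p.1 = 0 <;> simp [h, Prod.ext_iff]
  right_inv p := by by_cases h : p.1 = 0 <;> simp [h, Prod.ext_iff]

/-- The element `gₙ = τⁿ σ τ⁻ⁿ`. -/
def combG (n : ℤ) : Equiv.Perm (ℤ × ℤ) := combTau ^ n * combSigma * (combTau ^ n)⁻¹

section FiberShift

variable {X A : Type*} [AddGroup A]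

def Equiv.Perm.fiberShift : Multiplicative (X → A) →* Equiv.Perm (X × A) where
  toFun f :=
    { toFun p := (p.1, f.toAdd p.1 + p.2)
      invFun p := (p.1, -f.toAdd p.1 + p.2)
      left_inv p := by simp
      right_inv p := by simp }
  map_one' := by ext p <;> simp
  map_mul' f g := by ext p <;> simp [add_assoc]

@[simp]
lemma Equiv.Perm.fiberShift_apply (f : Multiplicative (X → A)) (p : X × A) :
    fiberShift f p = (p.1, f.toAdd p.1 + p.2) := rfl

lemma Equiv.Perm.fiberShift_injective : Function.Injective (fiberShift : _ →* Perm (X × A)) := by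
  intro f g h
  refine Multiplicative.toAdd.injective (funext fun x => ?_)
  simpa using congr_arg (fun e : Perm (X × A) => (e (x, 0)).2) h

end FiberShift

lemma DirectSum.range_eq_closure_of_one {ι G : Type*} [DecidableEq ι] [Group G]
    (ψ : Multiplicative (DirectSum ι fun _ => ℤ) →* G) :
    ψ.range = Subgroup.closure (Set.range fun i => ψ (.ofAdd (of _ i 1))) := by
  refine le_antisymm ?_ ((Subgroup.closure_le _).2 (Set.range_subset_iff.2 fun i => ⟨_, rfl⟩))
  rintro _ ⟨f, rfl⟩
  induction f using Multiplicative.rec with | ofAdd f => ?_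
  induction f using DirectSum.induction_on with
  | zero => simp
  | of i k =>
    have : of (fun _ => ℤ) i k = k • of _ i 1 := by rw [← map_zsmul, smul_eq_mul, mul_one]
    rw [this, ofAdd_zsmul, map_zpow]
    exact zpow_mem (Subgroup.subset_closure (Set.mem_range_self i)) k
  | add f g hf hg => simpa using mul_mem hf hg

lemma combTau_zpow_apply (n : ℤ) (p : ℤ × ℤ) : (combTau ^ n) p = (p.1 + n, p.2) := by
  induction n using Int.induction_on generalizing p with
  | zero => simp
  | succ k ih =>
    rw [zpow_add_one, Equiv.Perm.mul_apply, ih]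
    exact Prod.ext (by simp [combTau]; ring) rfl
  | pred k ih =>
    rw [zpow_sub_one, Equiv.Perm.mul_apply, ih]
    exact Prod.ext (by simp [combTau, Equiv.Perm.inv_def]; ring) rfl

lemma combG_apply (n : ℤ) (p : ℤ × ℤ) :
    combG n p = if p.1 = n then (p.1, p.2 + 1) else p := by
  rw [combG, ← zpow_neg, Equiv.Perm.mul_apply, Equiv.Perm.mul_apply, combTau_zpow_apply,
    combTau_zpow_apply]
  by_cases h : p.1 = n <;> simp [combSigma, h, ← sub_eq_add_neg, sub_eq_zero]

lemma combG_eq_fiberShift (n : ℤ) :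
    combG n = Equiv.Perm.fiberShift (.ofAdd (Pi.single n 1)) := by
  ext ⟨i, j⟩ : 1
  rw [combG_apply, Equiv.Perm.fiberShift_apply]
  by_cases h : i = n <;> simp [h, add_comm]

/-- The elements `gₙ = τⁿ σ τ⁻ⁿ` pairwise commute, and the subgroup they generate is free
abelian of countably infinite rank: the homomorphism from `⨁ (n : ℤ), ℤ` sending the `n`-th
standard basis element to `gₙ` is injective, with range the subgroup generated by the `gₙ`. -/
theorem stmt17 :
    (∀ m n : ℤ, combG m * combG n = combG n * combG m) ∧
    ∃ φ : Multiplicative (DirectSum ℤ fun _ => ℤ) →* Equiv.Perm (ℤ × ℤ),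
      (∀ n : ℤ, φ (Multiplicative.ofAdd (DirectSum.of (fun _ : ℤ => ℤ) n 1)) = combG n) ∧
      Function.Injective φ ∧
      φ.range = Subgroup.closure {x | ∃ n : ℤ, x = combG n} := by
  let φ := Equiv.Perm.fiberShift.comp (DirectSum.coeFnAddMonoidHom fun _ : ℤ => ℤ).toMultiplicative
  have hφ (n : ℤ) : φ (.ofAdd (DirectSum.of (fun _ : ℤ => ℤ) n 1)) = combG n := by
    rw [combG_eq_fiberShift]
    exact congr_arg (fun f => Equiv.Perm.fiberShift (.ofAdd f)) DFinsupp.single_eq_pi_single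
  refine ⟨fun m n => ?_, φ, hφ, ?_, ?_⟩
  · rw [← hφ m, ← hφ n]
    exact ((Commute.all _ _).map φ).eq
  · exact Equiv.Perm.fiberShift_injective.comp fun _ _ h =>
      DFunLike.coe_injective (F := DirectSum ℤ fun _ : ℤ => ℤ) h
  · rw [DirectSum.range_eq_closure_of_one]
    congr 1
    ext x
    simp only [hφ, Set.mem_range, Set.mem_ofPred_eq, eq_comm]
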